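/- arXiv:2207.11272 — 3 statements merged into one kernel-verified Lean document; each statement's English description precedes it below -/
import Mathlib

section
/- For every digraph D there exists a constant C_D > 0 such that for every integer n ≥ 1, max_{v ∈ V(D)} (d^+(v) − d^-(v)) · n ≤ S_D(n·1) ≤ max_{v ∈ V(D)} (d^+(v) − d^-(v)) · n + C_D·√n, where n·1 is the restriction vector giving each vertex the value n. -/
open Finset

/-- A digraph: finite vertex set, no loops, at most one arc per pair. -/
structure Digraph' (V : Type) where
  Adj : V → V → Bool
  irrefl : ∀ v, Adj v v = false
  asymm : ∀ u v, Adj u v = true → Adj v u = false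

namespace Digraph'

variable {V : Type} [Fintype V] [DecidableEq V] (D : Digraph' V)

/-- Out-neighborhood N⁺(v). -/
def outN (v : V) : Finset V := univ.filter fun u => D.Adj v u
/-- In-neighborhood N⁻(v). -/
def inN (v : V) : Finset V := univ.filter fun u => D.Adj u v

/-- max over vertices v of Σ_{u∈N⁺(v)} p u − Σ_{u∈N⁻(v)} p u. -/
noncomputable def payoff (p : V → ℝ) : ℝ :=
  sSup (Set.range fun v => (∑ u ∈ D.outN v, p u) - ∑ u ∈ D.inN v, p u)

/-- Auxiliary (fuel-indexed) definition of the value of the semi-restricted D-game. -/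
noncomputable def valueAux : ℕ → (V → ℕ) → ℝ
  | 0, _ => 0
  | (n+1), r =>
    if ∀ u, r u = 0 then 0
    else sInf { x : ℝ | ∃ p : V → ℝ, (∀ u, 0 ≤ p u) ∧ (∑ u, p u = 1) ∧
      (∀ u, p u ≠ 0 → r u ≠ 0) ∧
      x = D.payoff p + ∑ u, p u * valueAux n (fun w => r w - if w = u then 1 else 0) }

/-- The value S_D(r) of the semi-restricted D-game with restriction vector r. -/
noncomputable def value (r : V → ℕ) : ℝ := D.valueAux (∑ u, r u) r

end Digraph'

/-- A strategy for Rei in the semi-restricted D-game. -/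
structure ReiStrategy {V : Type} [Fintype V] [DecidableEq V] (D : Digraph' V) where
  play : (V → ℕ) → V → ℝ
  nonneg : ∀ r : V → ℕ, (¬ ∀ u, r u = 0) → ∀ u, 0 ≤ play r u
  sum_one : ∀ r : V → ℕ, (¬ ∀ u, r u = 0) → ∑ u, play r u = 1
  supp : ∀ r : V → ℕ, (¬ ∀ u, r u = 0) → ∀ u, play r u ≠ 0 → r u ≠ 0

namespace Digraph'

variable {V : Type} [Fintype V] [DecidableEq V] (D : Digraph' V)

/-- Auxiliary (fuel-indexed) value of Rei's strategy R. -/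
noncomputable def stratValueAux (R : ReiStrategy D) : ℕ → (V → ℕ) → ℝ
  | 0, _ => 0
  | (n+1), r =>
    if ∀ u, r u = 0 then 0
    else D.payoff (R.play r) +
      ∑ u, R.play r u * stratValueAux R n (fun w => r w - if w = u then 1 else 0)

/-- The value S_D(r; R) of Rei's strategy R at restriction vector r. -/
noncomputable def stratValue (R : ReiStrategy D) (r : V → ℕ) : ℝ :=
  D.stratValueAux R (∑ u, r u) r

/-- A strategy for Rei is optimal if its value equals the game value at every restriction vector. -/
def IsOptimal (R : ReiStrategy D) : Prop := ∀ r : V → ℕ, D.stratValue R r = D.value r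

/-- A strategy is oblivious if it only depends on the support of the restriction vector. -/
def IsOblivious (R : ReiStrategy D) : Prop :=
  ∀ r r' : V → ℕ, (∀ u, r u ≠ 0 ↔ r' u ≠ 0) → R.play r = R.play r'

/-- A digraph is oblivious if Rei has an oblivious optimal strategy. -/
def Oblivious : Prop := ∃ R : ReiStrategy D, D.IsOptimal R ∧ D.IsOblivious R

/-- A tournament: exactly one arc between any two distinct vertices. -/
def IsTournament : Prop := ∀ u v : V, u ≠ v → (D.Adj u v = true ∨ D.Adj v u = true)

/-- Eulerian: every vertex has equal in- and out-degree. -/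
def IsEulerian : Prop := ∀ v : V, (D.outN v).card = (D.inN v).card

/-- The skew adjacency matrix of a digraph. -/
def skewAdj : Matrix V V ℝ := fun u v =>
  if D.Adj u v then 1 else if D.Adj v u then -1 else 0

end Digraph'

/-!
Lower bound: let `A` be the skew adjacency matrix. Whatever Rei plays, the payoff of a move `p`
is at least `(A *ᵥ p) v` for any fixed vertex `v`, and these lower bounds telescope along the game
to `(A *ᵥ r) v`, which equals `n (d⁺(v) - d⁻(v))` at `r = n • 1`.

Upper bound: Rei plays proportionally to the remaining restriction vector `r`. With `N = ∑ r` and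
`c = A *ᵥ r`, the potential `√N log ∑ᵥ exp (cᵥ / √N) + (log |V| + 3) √N` bounds the value, by
induction on `N`: one step of the recursion is controlled by Jensen's inequality for `log`, the
estimate `exp y ≤ 1 + y + y²` for `|y| ≤ 1`, and Hölder's inequality, which moves the temperature
from `√N` to `√(N + 1)`. The log-sum-exp exceeds `maxᵥ cᵥ` by at most `√N log |V|`, which gives
`n max (d⁺ - d⁻) + O(√n)` at `r = n • 1`.
-/

open Real Matrix

section SmoothMax

variable {ι : Type*} [Fintype ι]

lemma sum_mul_exp_le_exp {p y : ι → ℝ} {ε : ℝ} (hp₀ : ∀ i, 0 ≤ p i) (hp₁ : ∑ i, p i = 1)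
    (hy : ∀ i, |y i| ≤ ε) (hε : ε ≤ 1) :
    ∑ i, p i * exp (y i) ≤ exp (∑ i, p i * y i + ε ^ 2) := by
  have hquad : ∀ i, exp (y i) ≤ 1 + y i + ε ^ 2 := fun i => by
    have h := (abs_le.1 (abs_exp_sub_one_sub_id_le ((hy i).trans hε))).2
    have hsq : y i ^ 2 ≤ ε ^ 2 := sq_le_sq' (abs_le.1 (hy i)).1 (abs_le.1 (hy i)).2
    linarith
  calc ∑ i, p i * exp (y i) ≤ ∑ i, p i * (1 + y i + ε ^ 2) :=
        sum_le_sum fun i _ => mul_le_mul_of_nonneg_left (hquad i) (hp₀ i)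
    _ = ∑ i, p i * y i + ε ^ 2 + 1 := by
        simp only [mul_add, mul_one, sum_add_distrib, ← sum_mul, hp₁]; ring
    _ ≤ exp (∑ i, p i * y i + ε ^ 2) := add_one_le_exp _

lemma sum_mul_log_le_log_sum_mul {p X : ι → ℝ} (hp₀ : ∀ i, 0 ≤ p i) (hp₁ : ∑ i, p i = 1)
    (hX : ∀ i, 0 < X i) : ∑ i, p i * log (X i) ≤ log (∑ i, p i * X i) :=
  strictConcaveOn_log_Ioi.concaveOn.le_map_sum (fun i _ => hp₀ i) hp₁ fun i _ => hX i

lemma log_sum_exp_mul_le [Nonempty ι] (x : ι → ℝ) {θ : ℝ} (hθ₀ : 0 < θ) (hθ₁ : θ ≤ 1) :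
    log (∑ i, exp (θ * x i)) ≤ θ * log (∑ i, exp (x i)) + (1 - θ) * log (Fintype.card ι) := by
  have hS : 0 < ∑ i, exp (θ * x i) := sum_pos (fun i _ => exp_pos _) univ_nonempty
  have hZ : 0 < ∑ i, exp (x i) := sum_pos (fun i _ => exp_pos _) univ_nonempty
  have hcard : (0 : ℝ) < Fintype.card ι := by exact_mod_cast Fintype.card_pos
  have holder : (∑ i, exp (θ * x i)) ^ θ⁻¹ ≤ (Fintype.card ι : ℝ) ^ (θ⁻¹ - 1) * ∑ i, exp (x i) := by
    have h := rpow_sum_le_const_mul_sum_rpow_of_nonneg univ (f := fun i => exp (θ * x i))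
      (one_le_inv_iff₀.2 ⟨hθ₀, hθ₁⟩) fun i _ => (exp_pos _).le
    simpa only [← exp_mul, mul_inv_cancel_right₀ hθ₀.ne', mul_comm θ, card_univ] using h
  have hlog := log_le_log (rpow_pos_of_pos hS _) holder
  rw [log_rpow hS, log_mul (rpow_pos_of_pos hcard _).ne' hZ.ne', log_rpow hcard] at hlog
  have := mul_le_mul_of_nonneg_left hlog hθ₀.le
  rw [← mul_assoc, mul_inv_cancel₀ hθ₀.ne', one_mul] at this
  linarith [show θ * ((θ⁻¹ - 1) * log (Fintype.card ι)) = (1 - θ) * log (Fintype.card ι) by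
    field_simp]

noncomputable def smoothMax (t : ℝ) (c : ι → ℝ) : ℝ := t * log (∑ i, exp (c i / t))

lemma le_smoothMax {t : ℝ} (ht : 0 < t) (c : ι → ℝ) (i : ι) : c i ≤ smoothMax t c := by
  have hle : exp (c i / t) ≤ ∑ j, exp (c j / t) :=
    single_le_sum (f := fun j => exp (c j / t)) (fun j _ => (exp_pos _).le) (mem_univ i)
  rw [smoothMax, ← div_le_iff₀' ht, le_log_iff_exp_le ((exp_pos _).trans_le hle)]
  exact hle

lemma smoothMax_le [Nonempty ι] {t b : ℝ} (ht : 0 < t) {c : ι → ℝ} (hc : ∀ i, c i ≤ b) :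
    smoothMax t c ≤ b + t * log (Fintype.card ι) := by
  have hcard : (0 : ℝ) < Fintype.card ι := by exact_mod_cast Fintype.card_pos
  have hsum : ∑ i, exp (c i / t) ≤ Fintype.card ι * exp (b / t) := by
    simpa using sum_le_sum fun i (_ : i ∈ univ) =>
      exp_le_exp.2 (div_le_div_of_nonneg_right (hc i) ht.le)
  have := log_le_log (sum_pos (fun i _ => exp_pos _) univ_nonempty) hsum
  rw [log_mul hcard.ne' (exp_pos _).ne', log_exp] at this
  have := mul_le_mul_of_nonneg_left this ht.le
  rw [smoothMax]
  field_simp at this ⊢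
  linarith

lemma smoothMax_mul_le [Nonempty ι] (c : ι → ℝ) {t θ : ℝ} (ht : 0 < t) (hθ₀ : 0 < θ)
    (hθ₁ : θ ≤ 1) :
    smoothMax (θ * t) (fun i => θ ^ 2 * c i)
      ≤ θ ^ 2 * smoothMax t c + θ * (1 - θ) * t * log (Fintype.card ι) := by
  have hrescale : ∀ i, θ ^ 2 * c i / (θ * t) = θ * (c i / t) := fun i => by
    field_simp
  have := mul_le_mul_of_nonneg_left (log_sum_exp_mul_le (fun i => c i / t) hθ₀ hθ₁)
    (mul_pos hθ₀ ht).le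
  simp only [smoothMax, hrescale]
  linarith

lemma sum_mul_sum_exp_sub_col_le {κ : Type*} [Fintype κ] (A : Matrix κ ι ℝ)
    (hA : ∀ v u, |A v u| ≤ 1) (c : κ → ℝ) {p : ι → ℝ} (hp₀ : ∀ i, 0 ≤ p i)
    (hp₁ : ∑ i, p i = 1) {σ : ℝ} (hσ : 1 ≤ σ) :
    ∑ u, p u * ∑ v, exp ((c - A.col u) v / σ)
      ≤ exp (σ⁻¹ ^ 2) * ∑ v, exp ((c - A *ᵥ p) v / σ) := by
  have hσ₀ : 0 < σ := one_pos.trans_le hσ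
  have hswap : ∑ u, p u * ∑ v, exp ((c - A.col u) v / σ)
      = ∑ v, exp (c v / σ) * ∑ u, p u * exp (-A v u / σ) := by
    simp only [mul_sum]
    rw [sum_comm]
    refine sum_congr rfl fun v _ => sum_congr rfl fun u _ => ?_
    rw [Pi.sub_apply, col_apply, sub_div, sub_eq_add_neg, exp_add, neg_div]
    ring
  have hinner : ∀ v, ∑ u, p u * exp (-A v u / σ)
      ≤ exp (σ⁻¹ ^ 2) * exp (-(A *ᵥ p) v / σ) := fun v => by
    refine (sum_mul_exp_le_exp hp₀ hp₁ (fun u => ?_) (inv_le_one_of_one_le₀ hσ)).trans_eq ?_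
    · rw [neg_div, abs_neg, abs_div, abs_of_pos hσ₀, div_eq_mul_inv]
      exact mul_le_of_le_one_left (inv_pos.2 hσ₀).le (hA v u)
    · rw [← exp_add, mulVec, dotProduct, neg_div, sum_div, ← sum_neg_distrib, add_comm]
      congr 2
      exact sum_congr rfl fun u _ => by ring
  rw [hswap, mul_sum]
  refine sum_le_sum fun v _ => ?_
  calc exp (c v / σ) * ∑ u, p u * exp (-A v u / σ)
      ≤ exp (c v / σ) * (exp (σ⁻¹ ^ 2) * exp (-(A *ᵥ p) v / σ)) :=
        mul_le_mul_of_nonneg_left (hinner v) (exp_pos _).le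
    _ = exp (σ⁻¹ ^ 2) * exp ((c - A *ᵥ p) v / σ) := by
        rw [mul_left_comm, ← exp_add, Pi.sub_apply, sub_div, neg_div, sub_eq_add_neg]

lemma sum_mul_smoothMax_sub_col_le {κ : Type*} [Fintype κ] [Nonempty κ] (A : Matrix κ ι ℝ)
    (hA : ∀ v u, |A v u| ≤ 1) (c : κ → ℝ) {p : ι → ℝ} (hp₀ : ∀ i, 0 ≤ p i)
    (hp₁ : ∑ i, p i = 1) {σ : ℝ} (hσ : 1 ≤ σ) :
    ∑ u, p u * smoothMax σ (c - A.col u) ≤ smoothMax σ (c - A *ᵥ p) + σ⁻¹ := by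
  have hσ₀ : 0 < σ := one_pos.trans_le hσ
  have hX : ∀ u, 0 < ∑ v, exp ((c - A.col u) v / σ) := fun u =>
    sum_pos (fun v _ => exp_pos _) univ_nonempty
  have hmix_pos : 0 < ∑ u, p u * ∑ v, exp ((c - A.col u) v / σ) := by
    obtain ⟨u, -, hu⟩ := exists_ne_zero_of_sum_ne_zero (hp₁.trans_ne one_ne_zero)
    exact sum_pos' (fun u _ => mul_nonneg (hp₀ u) (hX u).le)
      ⟨u, mem_univ u, mul_pos ((hp₀ u).lt_of_ne' hu) (hX u)⟩
  have hlog := (sum_mul_log_le_log_sum_mul hp₀ hp₁ hX).trans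
    (log_le_log hmix_pos (sum_mul_sum_exp_sub_col_le A hA c hp₀ hp₁ hσ))
  rw [log_mul (exp_pos _).ne' (sum_pos (fun v _ => exp_pos _) univ_nonempty).ne', log_exp]
    at hlog
  calc ∑ u, p u * smoothMax σ (c - A.col u)
      = σ * ∑ u, p u * log (∑ v, exp ((c - A.col u) v / σ)) := by
        simp only [smoothMax, mul_sum]
        exact sum_congr rfl fun u _ => by ring
    _ ≤ σ * (σ⁻¹ ^ 2 + log (∑ v, exp ((c - A *ᵥ p) v / σ))) :=
        mul_le_mul_of_nonneg_left hlog hσ₀.le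
    _ = smoothMax σ (c - A *ᵥ p) + σ⁻¹ := by
        rw [smoothMax]
        field_simp
        ring

lemma mul_one_sub_div_add_inv_le {σ ρ L : ℝ} (hσ : 1 ≤ σ) (hρ₀ : 0 < ρ)
    (hρ : ρ ^ 2 = σ ^ 2 + 1) (hL : 0 ≤ L) :
    σ * (1 - σ / ρ) * L + σ⁻¹ + (L + 3) * σ ≤ (L + 3) * ρ := by
  have hσρ : σ ≤ ρ := by nlinarith
  have hρσ : ρ ≤ 2 * σ := by nlinarith
  have h₁ : σ * (1 - σ / ρ) ≤ ρ - σ := by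
    rw [mul_one_sub, mul_div_assoc', sub_le_iff_le_add, ← sub_le_iff_le_add', le_div_iff₀ hρ₀]
    nlinarith [sq_nonneg (ρ - σ)]
  -- `(ρ - σ) (ρ + σ) = 1` and `ρ + σ ≤ 3 σ`
  have h₂ : σ⁻¹ ≤ 3 * (ρ - σ) := by
    rw [inv_le_iff_one_le_mul₀' (by linarith)]
    nlinarith [mul_le_mul_of_nonneg_left (by linarith : ρ + σ ≤ 3 * σ) (sub_nonneg.2 hσρ)]
  nlinarith

/-- With `A *ᵥ p = c / (N + 1)` (Rei's move proportional to the remaining restriction vector),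
the potential `smoothMax √N c + (log |κ| + 3) √N` dominates one step of the value recursion. -/
lemma smoothMax_supersolution {κ : Type*} [Fintype κ] [Nonempty κ] (A : Matrix κ ι ℝ)
    (hA : ∀ v u, |A v u| ≤ 1) (N : ℕ) {c : κ → ℝ} {p : ι → ℝ} (hp₀ : ∀ i, 0 ≤ p i)
    (hp₁ : ∑ i, p i = 1) (hAp : A *ᵥ p = ((N : ℝ) + 1)⁻¹ • c) :
    ((N : ℝ) + 1)⁻¹ * smoothMax √(N + 1) c
        + ∑ u, p u * (smoothMax √N (c - A.col u) + (log (Fintype.card κ) + 3) * √N)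
      ≤ smoothMax √(N + 1) c + (log (Fintype.card κ) + 3) * √(N + 1) := by
  have hL : 0 ≤ log (Fintype.card κ) := log_natCast_nonneg _
  simp only [mul_add, sum_add_distrib, ← sum_mul, hp₁, one_mul]
  rcases Nat.eq_zero_or_pos N with rfl | hN
  · simp [smoothMax]
    linarith
  set σ := √(N : ℝ)
  set ρ := √((N : ℝ) + 1)
  have hσ : 1 ≤ σ := one_le_sqrt.2 (by exact_mod_cast hN)
  have hρ₀ : 0 < ρ := sqrt_pos.2 (by positivity)
  have hσρ : σ ≤ ρ := sqrt_le_sqrt (by linarith)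
  have hρsq : ρ ^ 2 = σ ^ 2 + 1 := by simp [σ, ρ, sq_sqrt, add_nonneg]
  set θ := σ / ρ
  have hθ₀ : 0 < θ := by positivity
  have hθ₁ : θ ≤ 1 := div_le_one_of_le₀ hσρ hρ₀.le
  have hθρ : θ * ρ = σ := div_mul_cancel₀ σ hρ₀.ne'
  have hθsq : θ ^ 2 = 1 - ((N : ℝ) + 1)⁻¹ := by
    rw [div_pow, sq_sqrt (Nat.cast_nonneg N), sq_sqrt (by positivity)]
    field_simp
    ring
  have hshift : c - A *ᵥ p = fun v => θ ^ 2 * c v := by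
    ext v
    simp [hAp, hθsq]
    ring
  have hjensen := sum_mul_smoothMax_sub_col_le A hA c hp₀ hp₁ hσ
  rw [hshift] at hjensen
  have hholder := smoothMax_mul_le c hρ₀ hθ₀ hθ₁
  rw [hθρ, show θ * (1 - θ) * ρ = σ * (1 - σ / ρ) by simp only [θ]; field_simp] at hholder
  have hcoef : θ ^ 2 * smoothMax ρ c = smoothMax ρ c - ((N : ℝ) + 1)⁻¹ * smoothMax ρ c := by
    rw [hθsq]
    ring
  have hgap := mul_one_sub_div_add_inv_le hσ hρ₀ hρsq hL
  linarith

end SmoothMax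

namespace Digraph'

section Skew

variable {V : Type} (D : Digraph' V)

lemma skewAdj_apply (v u : V) :
    D.skewAdj v u = (if D.Adj v u then 1 else 0) - (if D.Adj u v then 1 else 0) := by
  by_cases h : D.Adj v u
  · simp [skewAdj, h, D.asymm v u h]
  · by_cases h' : D.Adj u v <;> simp [skewAdj, h, h']

lemma abs_skewAdj_le_one (v u : V) : |D.skewAdj v u| ≤ 1 := by
  unfold skewAdj
  split_ifs <;> simp

variable [Fintype V]

lemma sum_outN_sub_sum_inN (p : V → ℝ) (v : V) :
    ∑ u ∈ D.outN v, p u - ∑ u ∈ D.inN v, p u = (D.skewAdj *ᵥ p) v := by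
  simp only [outN, inN, sum_filter, mulVec, dotProduct, skewAdj_apply, sub_mul, ite_mul,
    one_mul, zero_mul, sum_sub_distrib]

lemma skewAdj_mulVec_const (x : ℝ) :
    D.skewAdj *ᵥ (fun _ => x) = fun v => x * (((D.outN v).card : ℝ) - (D.inN v).card) := by
  ext v
  rw [← sum_outN_sub_sum_inN, sum_const, sum_const, nsmul_eq_mul, nsmul_eq_mul]
  ring

lemma skewAdj_mulVec_le_payoff (p : V → ℝ) (v : V) : (D.skewAdj *ᵥ p) v ≤ D.payoff p := by
  rw [← sum_outN_sub_sum_inN]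
  exact le_csSup (Set.finite_range _).bddAbove ⟨v, rfl⟩

variable [Nonempty V]

lemma payoff_le {p : V → ℝ} {b : ℝ} (h : ∀ v, (D.skewAdj *ᵥ p) v ≤ b) : D.payoff p ≤ b :=
  csSup_le (Set.range_nonempty _) <| by
    rintro _ ⟨v, rfl⟩
    exact (sum_outN_sub_sum_inN D p v).trans_le (h v)

lemma neg_one_le_payoff {p : V → ℝ} (hp₀ : ∀ u, 0 ≤ p u) (hp₁ : ∑ u, p u = 1) :
    -1 ≤ D.payoff p := by
  obtain ⟨v⟩ := ‹Nonempty V›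
  refine le_trans ?_ (D.skewAdj_mulVec_le_payoff p v)
  rw [← hp₁, ← sum_neg_distrib, mulVec, dotProduct]
  exact sum_le_sum fun u _ => by
    nlinarith [hp₀ u, (abs_le.1 (D.abs_skewAdj_le_one v u)).1]

lemma neg_succ_le_payoff_add {N : ℕ} {p : V → ℝ} (hp₀ : ∀ u, 0 ≤ p u) (hp₁ : ∑ u, p u = 1)
    {x : V → ℝ} (hx : ∀ u, -(N : ℝ) ≤ x u) : -((N : ℝ) + 1) ≤ D.payoff p + ∑ u, p u * x u := by
  have hsum : ∑ u, p u * (-(N : ℝ)) ≤ ∑ u, p u * x u :=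
    sum_le_sum fun u _ => mul_le_mul_of_nonneg_left (hx u) (hp₀ u)
  rw [← sum_mul, hp₁] at hsum
  linarith [D.neg_one_le_payoff hp₀ hp₁]

end Skew

section RestrictionVectors

variable {V : Type}

lemma decrement_eq [DecidableEq V] (r : V → ℕ) (u : V) :
    (fun w => r w - if w = u then 1 else 0) = r - Pi.single u 1 := by
  ext w
  by_cases h : w = u <;> simp [h]

variable [Fintype V]

lemma sum_sub_single [DecidableEq V] {r : V → ℕ} {u : V} (hu : r u ≠ 0) :
    ∑ w, (r - Pi.single u 1 : V → ℕ) w = ∑ w, r w - 1 := by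
  have hle : ∀ w ∈ univ, (Pi.single u 1 : V → ℕ) w ≤ r w := fun w _ => by
    by_cases h : w = u
    · subst h; simpa using Nat.one_le_iff_ne_zero.2 hu
    · simp [h]
  simp only [Pi.sub_apply, sum_tsub_distrib univ hle, sum_pi_single', mem_univ, if_true]

lemma mulVec_cast_sub_single [DecidableEq V] {κ : Type*} (A : Matrix κ V ℝ) {r : V → ℕ} {u : V}
    (hu : r u ≠ 0) : A *ᵥ (Nat.cast ∘ (r - Pi.single u 1)) = A *ᵥ (Nat.cast ∘ r) - A.col u := by
  have hcast : (Nat.cast ∘ (r - Pi.single u 1) : V → ℝ) = Nat.cast ∘ r - Pi.single u 1 := by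
    ext w
    by_cases h : w = u
    · subst h; simp [Nat.cast_sub (Nat.one_le_iff_ne_zero.2 hu)]
    · simp [h]
  rw [hcast, mulVec_sub, mulVec_single_one]

def IsAdmissible (r : V → ℕ) (p : V → ℝ) : Prop :=
  (∀ u, 0 ≤ p u) ∧ ∑ u, p u = 1 ∧ ∀ u, p u ≠ 0 → r u ≠ 0

lemma IsAdmissible.sum_mul_le_sum_mul {r : V → ℕ} {p : V → ℝ} (hp : IsAdmissible r p)
    {f g : V → ℝ} (h : ∀ u, r u ≠ 0 → f u ≤ g u) : ∑ u, p u * f u ≤ ∑ u, p u * g u :=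
  sum_le_sum fun u _ => by
    by_cases hu : p u = 0
    · simp [hu]
    · exact mul_le_mul_of_nonneg_left (h u (hp.2.2 u hu)) (hp.1 u)

noncomputable def proportional (r : V → ℕ) : V → ℝ := (∑ w, (r w : ℝ))⁻¹ • (Nat.cast ∘ r)

lemma isAdmissible_proportional {r : V → ℕ} (hr : ∑ u, r u ≠ 0) :
    IsAdmissible r (proportional r) := by
  have hr' : (∑ w, (r w : ℝ)) ≠ 0 := by exact_mod_cast hr
  refine ⟨fun u => ?_, ?_, fun u hu h => hu (by simp [proportional, h])⟩
  · simp only [proportional, Pi.smul_apply, Function.comp_apply, smul_eq_mul]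
    positivity
  · simp only [proportional, Pi.smul_apply, Function.comp_apply, smul_eq_mul, ← mul_sum,
      inv_mul_cancel₀ hr']

end RestrictionVectors

section Recursion

variable {V : Type} [Fintype V] [DecidableEq V] (D : Digraph' V)

lemma le_valueAux_succ {N : ℕ} {r : V → ℕ} (hr : ∑ u, r u ≠ 0) {b : ℝ}
    (h : ∀ p, IsAdmissible r p →
      b ≤ D.payoff p + ∑ u, p u * D.valueAux N (r - Pi.single u 1)) :
    b ≤ D.valueAux (N + 1) r := by
  have hr' : ¬ ∀ u, r u = 0 := fun h₀ => hr (sum_eq_zero fun u _ => h₀ u)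
  obtain ⟨hp₀, hp₁, hsupp⟩ := isAdmissible_proportional hr
  rw [valueAux, if_neg hr']
  refine le_csInf ⟨_, proportional r, hp₀, hp₁, hsupp, rfl⟩ ?_
  rintro _ ⟨p, hp₀, hp₁, hsupp, rfl⟩
  simpa only [decrement_eq] using h p ⟨hp₀, hp₁, hsupp⟩

lemma skewAdj_mulVec_le_valueAux {N : ℕ} {r : V → ℕ} (hr : ∑ u, r u = N) (v : V) :
    (D.skewAdj *ᵥ (Nat.cast ∘ r)) v ≤ D.valueAux N r := by
  induction N generalizing r with
  | zero =>
    obtain rfl : r = 0 := funext fun u => sum_eq_zero_iff.1 hr u (mem_univ u)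
    simp [valueAux]
  | succ N ih =>
    refine D.le_valueAux_succ (hr ▸ N.succ_ne_zero) fun p hp => ?_
    have hstep : ∀ u, r u ≠ 0 →
        (D.skewAdj *ᵥ (Nat.cast ∘ r)) v - D.skewAdj v u ≤ D.valueAux N (r - Pi.single u 1) :=
      fun u hu => by
        have := ih (by rw [sum_sub_single hu, hr]; rfl)
        rwa [mulVec_cast_sub_single _ hu, Pi.sub_apply, col_apply] at this
    have hmean : ∑ u, p u * ((D.skewAdj *ᵥ (Nat.cast ∘ r)) v - D.skewAdj v u)
        = (D.skewAdj *ᵥ (Nat.cast ∘ r)) v - (D.skewAdj *ᵥ p) v := by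
      simp only [mul_sub, sum_sub_distrib, ← sum_mul, hp.2.1, one_mul, mulVec, dotProduct,
        mul_comm]
    calc (D.skewAdj *ᵥ (Nat.cast ∘ r)) v
        = (D.skewAdj *ᵥ p) v + ∑ u, p u * ((D.skewAdj *ᵥ (Nat.cast ∘ r)) v - D.skewAdj v u) := by
          rw [hmean]
          ring
      _ ≤ _ := add_le_add (D.skewAdj_mulVec_le_payoff p v) (hp.sum_mul_le_sum_mul hstep)

lemma skewAdj_mulVec_le_value (r : V → ℕ) (v : V) :
    (D.skewAdj *ᵥ (Nat.cast ∘ r)) v ≤ D.value r :=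
  D.skewAdj_mulVec_le_valueAux rfl v

variable [Nonempty V]

lemma neg_le_valueAux (N : ℕ) (r : V → ℕ) : -(N : ℝ) ≤ D.valueAux N r := by
  induction N generalizing r with
  | zero => simp [valueAux]
  | succ N ih =>
    by_cases hr : ∑ u, r u = 0
    · rw [valueAux, if_pos fun u => sum_eq_zero_iff.1 hr u (mem_univ u)]
      exact neg_nonpos.2 (Nat.cast_nonneg _)
    · refine D.le_valueAux_succ hr fun p ⟨hp₀, hp₁, _⟩ => ?_
      exact_mod_cast D.neg_succ_le_payoff_add hp₀ hp₁ fun u => ih _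

lemma valueAux_succ_le {N : ℕ} {r : V → ℕ} (hr : ∑ u, r u ≠ 0) {p : V → ℝ}
    (hp : IsAdmissible r p) :
    D.valueAux (N + 1) r ≤ D.payoff p + ∑ u, p u * D.valueAux N (r - Pi.single u 1) := by
  have hr' : ¬ ∀ u, r u = 0 := fun h₀ => hr (sum_eq_zero fun u _ => h₀ u)
  obtain ⟨hp₀, hp₁, hsupp⟩ := hp
  rw [valueAux, if_neg hr']
  refine csInf_le ⟨-((N : ℝ) + 1), ?_⟩ ⟨p, hp₀, hp₁, hsupp, by simp only [decrement_eq]⟩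
  rintro _ ⟨q, hq₀, hq₁, -, rfl⟩
  exact D.neg_succ_le_payoff_add hq₀ hq₁ fun u => D.neg_le_valueAux N _

lemma valueAux_le_smoothMax {N : ℕ} {r : V → ℕ} (hr : ∑ u, r u = N) :
    D.valueAux N r ≤ smoothMax √N (D.skewAdj *ᵥ (Nat.cast ∘ r))
      + (log (Fintype.card V) + 3) * √N := by
  induction N generalizing r with
  | zero => simp [valueAux, smoothMax]
  | succ N ih =>
    set c := D.skewAdj *ᵥ (Nat.cast ∘ r)
    have hr₀ : ∑ u, r u ≠ 0 := hr ▸ N.succ_ne_zero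
    have hp := isAdmissible_proportional hr₀
    have hAp : D.skewAdj *ᵥ proportional r = ((N : ℝ) + 1)⁻¹ • c := by
      rw [proportional, mulVec_smul]
      congr
      exact_mod_cast hr
    have hpayoff : D.payoff (proportional r) ≤ ((N : ℝ) + 1)⁻¹ * smoothMax √(N + 1) c :=
      D.payoff_le fun v => by
        rw [hAp, Pi.smul_apply, smul_eq_mul]
        exact mul_le_mul_of_nonneg_left (le_smoothMax (by positivity) c v) (by positivity)
    have hcont : ∑ u, proportional r u * D.valueAux N (r - Pi.single u 1)
        ≤ ∑ u, proportional r u * (smoothMax √N (c - D.skewAdj.col u)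
          + (log (Fintype.card V) + 3) * √N) :=
      hp.sum_mul_le_sum_mul fun u hu => by
        have := ih (by rw [sum_sub_single hu, hr]; rfl)
        rwa [mulVec_cast_sub_single _ hu] at this
    push_cast
    exact ((D.valueAux_succ_le hr₀ hp).trans (add_le_add hpayoff hcont)).trans
      (smoothMax_supersolution D.skewAdj D.abs_skewAdj_le_one N hp.1 hp.2.1 hAp)

lemma value_le {r : V → ℕ} (hr : ∑ u, r u ≠ 0) {b : ℝ}
    (hb : ∀ v, (D.skewAdj *ᵥ (Nat.cast ∘ r)) v ≤ b) :
    D.value r ≤ b + (2 * log (Fintype.card V) + 3) * √(∑ u, r u : ℕ) := by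
  have hpos : 0 < √(∑ u, r u : ℕ) := sqrt_pos.2 (by exact_mod_cast Nat.pos_of_ne_zero hr)
  have := (D.valueAux_le_smoothMax rfl).trans (add_le_add_left (smoothMax_le hpos hb) _)
  rw [value]
  linarith

end Recursion

end Digraph'

theorem value_uniform_bounds {V : Type} [Fintype V] [DecidableEq V] [Nonempty V]
    (D : Digraph' V) :
    ∃ C : ℝ, 0 < C ∧ ∀ n : ℕ, 1 ≤ n →
      (sSup (Set.range fun v => ((D.outN v).card : ℝ) - ((D.inN v).card : ℝ))) * n
          ≤ D.value (fun _ => n) ∧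
      D.value (fun _ => n)
          ≤ (sSup (Set.range fun v => ((D.outN v).card : ℝ) - ((D.inN v).card : ℝ))) * n
            + C * Real.sqrt n := by
  set a : V → ℝ := fun v => ((D.outN v).card : ℝ) - ((D.inN v).card : ℝ)
  have hL : 0 ≤ log (Fintype.card V) := log_natCast_nonneg _
  have hcard : (0 : ℝ) < Fintype.card V := by exact_mod_cast Fintype.card_pos
  refine ⟨(2 * log (Fintype.card V) + 3) * √(Fintype.card V), by positivity, fun n hn => ?_⟩
  have hc : D.skewAdj *ᵥ (Nat.cast ∘ fun _ => n) = fun v => (n : ℝ) * a v :=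
    D.skewAdj_mulVec_const n
  have hN : ∑ _u : V, n = Fintype.card V * n := by simp
  obtain ⟨v, hv⟩ := (Set.range_nonempty a).csSup_mem (Set.finite_range a)
  constructor
  · simpa [hc, ← hv, mul_comm] using D.skewAdj_mulVec_le_value (fun _ => n) v
  · have hle : ∀ w, (D.skewAdj *ᵥ (Nat.cast ∘ fun _ => n)) w ≤ sSup (Set.range a) * n :=
      fun w => by
        simpa only [hc, mul_comm (n : ℝ)] using mul_le_mul_of_nonneg_right
          (le_csSup (Set.finite_range a).bddAbove ⟨w, rfl⟩) (Nat.cast_nonneg n)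
    have := D.value_le (by rw [hN]; positivity) hle
    rwa [hN, Nat.cast_mul, sqrt_mul hcard.le, ← mul_assoc] at this
end

section
/- Let D be a digraph, let u, v ∈ V(D), and let r be a restriction vector with r_u ≥ 1 and r_v ≥ 1. Define α(u,v) = 2 if N^+(u) ∩ N^-(v) ≠ ∅; α(u,v) = 0 if N^+(u) ∪ N^-(v) = ∅; and α(u,v) = 1 otherwise. Then S_D(r − δ_u) ≤ S_D(r − δ_v) + α(u,v). Moreover, the inequality is strict whenever N^-(u) ≠ ∅ or α(u,v) = 2. -/
open Finset

/-- α(u,v): 2 if N⁺(u) ∩ N⁻(v) ≠ ∅, 0 if N⁺(u) ∪ N⁻(v) = ∅, and 1 otherwise. -/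
noncomputable def alphaUV {V : Type} [Fintype V] [DecidableEq V] (D : Digraph' V)
    (u v : V) : ℝ :=
  if (D.outN u ∩ D.inN v).Nonempty then 2
  else if D.outN u ∪ D.inN v = ∅ then 0
  else 1

namespace Digraph'
set_option linter.unusedSectionVars false

variable {V : Type} [Fintype V] [DecidableEq V] (D : Digraph' V)

/-- The payoff against a single vertex w. -/
noncomputable def fpay (p : V → ℝ) (w : V) : ℝ :=
  (∑ u ∈ D.outN w, p u) - ∑ u ∈ D.inN w, p u

lemma payoff_eq (p : V → ℝ) : D.payoff p = sSup (Set.range (D.fpay p)) := rfl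

lemma fpay_le_payoff [Nonempty V] (p : V → ℝ) (w : V) : D.fpay p w ≤ D.payoff p := by
  rw [payoff_eq]
  exact le_csSup (Set.finite_range _).bddAbove ⟨w, rfl⟩

lemma payoff_le_s5 [Nonempty V] (p : V → ℝ) (c : ℝ) (h : ∀ w, D.fpay p w ≤ c) :
    D.payoff p ≤ c := by
  rw [payoff_eq]
  exact csSup_le (Set.range_nonempty _) (by rintro x ⟨w, rfl⟩; exact h w)

lemma mem_outN {w x : V} : x ∈ D.outN w ↔ D.Adj w x := by simp [outN]

lemma mem_inN {w x : V} : x ∈ D.inN w ↔ D.Adj x w := by simp [inN]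

end Digraph'
namespace Digraph'
set_option linter.unusedSectionVars false

variable {V : Type} [Fintype V] [DecidableEq V] (D : Digraph' V)

lemma sum_subset_le_one {p : V → ℝ} (hp : ∀ u, 0 ≤ p u) (hs : ∑ u, p u = 1)
    (s : Finset V) : ∑ u ∈ s, p u ≤ 1 :=
  hs ▸ Finset.sum_le_sum_of_subset_of_nonneg (Finset.subset_univ s) (fun i _ _ => hp i)

lemma fpay_le_one {p : V → ℝ} (hp : ∀ u, 0 ≤ p u) (hs : ∑ u, p u = 1) (w : V) :
    D.fpay p w ≤ 1 := by
  have h1 := sum_subset_le_one hp hs (D.outN w)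
  have h2 : 0 ≤ ∑ u ∈ D.inN w, p u := Finset.sum_nonneg fun i _ => hp i
  rw [fpay]; linarith

lemma payoff_le_one [Nonempty V] {p : V → ℝ} (hp : ∀ u, 0 ≤ p u) (hs : ∑ u, p u = 1) :
    D.payoff p ≤ 1 := D.payoff_le_s5 p 1 (D.fpay_le_one hp hs)

lemma neg_one_le_fpay {p : V → ℝ} (hp : ∀ u, 0 ≤ p u) (hs : ∑ u, p u = 1) (w : V) :
    (-1 : ℝ) ≤ D.fpay p w := by
  have h1 := sum_subset_le_one hp hs (D.inN w)
  have h2 : 0 ≤ ∑ u ∈ D.outN w, p u := Finset.sum_nonneg fun i _ => hp i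
  rw [fpay]; linarith

lemma fpay_eq_sum (p : V → ℝ) (w : V) :
    D.fpay p w = ∑ x, ((if D.Adj w x then p x else 0) - (if D.Adj x w then p x else 0)) := by
  rw [fpay, Finset.sum_sub_distrib, outN, inN, Finset.sum_filter, Finset.sum_filter]

lemma sum_fpay_zero (p : V → ℝ) : ∑ w, p w * D.fpay p w = 0 := by
  have hanti : ∀ w x : V, p w * ((if D.Adj w x then p x else 0) - (if D.Adj x w then p x else 0))
      = -(p x * ((if D.Adj x w then p w else 0) - (if D.Adj w x then p w else 0))) := by
    intro w x; split_ifs <;> ring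
  have : (∑ w, ∑ x, p w * ((if D.Adj w x then p x else 0) - (if D.Adj x w then p x else 0)))
      = -(∑ w, ∑ x, p w * ((if D.Adj w x then p x else 0) - (if D.Adj x w then p x else 0))) := by
    nth_rewrite 2 [Finset.sum_comm]
    rw [← Finset.sum_neg_distrib]
    refine Finset.sum_congr rfl fun w _ => ?_
    rw [← Finset.sum_neg_distrib]
    exact Finset.sum_congr rfl fun x _ => hanti w x
  have hz : (∑ w, ∑ x, p w * ((if D.Adj w x then p x else 0) - (if D.Adj x w then p x else 0))) = 0 := by
    linarith
  calc ∑ w, p w * D.fpay p w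
      = ∑ w, ∑ x, p w * ((if D.Adj w x then p x else 0) - (if D.Adj x w then p x else 0)) := by
        refine Finset.sum_congr rfl fun w _ => ?_
        rw [D.fpay_eq_sum, Finset.mul_sum]
    _ = 0 := hz

lemma payoff_nonneg [Nonempty V] {p : V → ℝ} (hp : ∀ u, 0 ≤ p u) (hs : ∑ u, p u = 1) :
    0 ≤ D.payoff p := by
  have h1 : ∑ w, p w * D.fpay p w ≤ ∑ w, p w * D.payoff p :=
    Finset.sum_le_sum fun w _ => mul_le_mul_of_nonneg_left (D.fpay_le_payoff p w) (hp w)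
  rw [D.sum_fpay_zero] at h1
  rw [← Finset.sum_mul, hs, one_mul] at h1
  exact h1

end Digraph'
namespace Digraph'
set_option linter.unusedSectionVars false

variable {V : Type} [Fintype V] [DecidableEq V] (D : Digraph' V)

/-- Shift the mass at `u` to `v`. -/
noncomputable def shiftP (p : V → ℝ) (u v : V) : V → ℝ :=
  fun x => if x = u then 0 else if x = v then p v + p u else p x

lemma shiftP_nonneg {p : V → ℝ} (hp : ∀ u, 0 ≤ p u) (u v x : V) :
    0 ≤ shiftP p u v x := by
  unfold shiftP
  split_ifs with h1 h2
  · exact le_refl 0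
  · exact add_nonneg (hp v) (hp u)
  · exact hp x

lemma shiftP_decomp {p : V → ℝ} {u v : V} (huv : u ≠ v) (x : V) (g : V → ℝ) :
    shiftP p u v x * g x
      = p x * g x + ((if x = v then p u * g x else 0) - (if x = u then p u * g x else 0)) := by
  unfold shiftP
  by_cases h1 : x = u
  · subst h1; rw [if_pos rfl, if_pos rfl, if_neg huv]; ring
  · rw [if_neg h1, if_neg h1]
    by_cases h2 : x = v
    · subst h2; rw [if_pos rfl, if_pos rfl]; ring
    · rw [if_neg h2, if_neg h2]; ring

lemma sum_shiftP_mul {p : V → ℝ} {u v : V} (huv : u ≠ v) (s : Finset V) (g : V → ℝ) :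
    ∑ x ∈ s, shiftP p u v x * g x
      = ∑ x ∈ s, p x * g x + ((if v ∈ s then p u * g v else 0) - (if u ∈ s then p u * g u else 0)) := by
  rw [Finset.sum_congr rfl fun x _ => shiftP_decomp huv x g, Finset.sum_add_distrib,
    Finset.sum_sub_distrib, Finset.sum_ite_eq' s v (fun x => p u * g x),
    Finset.sum_ite_eq' s u (fun x => p u * g x)]

lemma sum_shiftP {p : V → ℝ} {u v : V} (huv : u ≠ v) (s : Finset V) :
    ∑ x ∈ s, shiftP p u v x
      = ∑ x ∈ s, p x + ((if v ∈ s then p u else 0) - (if u ∈ s then p u else 0)) := by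
  have := sum_shiftP_mul (p := p) huv s (fun _ => 1)
  simpa using this

lemma sum_shiftP_univ {p : V → ℝ} {u v : V} (huv : u ≠ v) (hs : ∑ u, p u = 1) :
    ∑ x, shiftP p u v x = 1 := by
  rw [sum_shiftP huv, hs]; simp

/-- The coefficient of the payoff change when mass moves from u to v. -/
noncomputable def dvec (u v w : V) : ℝ :=
  ((if D.Adj w v then 1 else 0) - (if D.Adj v w then 1 else 0))
    - ((if D.Adj w u then 1 else 0) - (if D.Adj u w then 1 else 0))

lemma fpay_shiftP {p : V → ℝ} {u v : V} (huv : u ≠ v) (w : V) :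
    D.fpay (shiftP p u v) w = D.fpay p w + p u * D.dvec u v w := by
  have h1 : ∑ x ∈ D.outN w, shiftP p u v x
      = ∑ x ∈ D.outN w, p x + ((if D.Adj w v then p u else 0) - (if D.Adj w u then p u else 0)) := by
    rw [sum_shiftP huv]
    congr 2 <;> simp [mem_outN]
  have h2 : ∑ x ∈ D.inN w, shiftP p u v x
      = ∑ x ∈ D.inN w, p x + ((if D.Adj v w then p u else 0) - (if D.Adj u w then p u else 0)) := by
    rw [sum_shiftP huv]
    congr 2 <;> simp [mem_inN]
  rw [fpay, fpay, h1, h2, dvec]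
  split_ifs <;> ring

end Digraph'
namespace Digraph'
set_option linter.unusedSectionVars false

variable {V : Type} [Fintype V] [DecidableEq V] (D : Digraph' V)

lemma dvec_le_two (u v w : V) : D.dvec u v w ≤ 2 := by
  rw [dvec]; split_ifs <;> norm_num

lemma dvec_le_one {u v w : V} (h : ¬(D.Adj u w = true ∧ D.Adj w v = true)) :
    D.dvec u v w ≤ 1 := by
  rw [dvec]
  by_cases h1 : D.Adj w v = true
  · have h2 : ¬ D.Adj u w = true := fun hc => h ⟨hc, h1⟩
    rw [if_pos h1, if_neg h2]
    split_ifs <;> norm_num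
  · rw [if_neg h1]
    split_ifs <;> norm_num

lemma dvec_nonpos {u v w : V} (h1 : ¬ D.Adj u w = true) (h2 : ¬ D.Adj w v = true) :
    D.dvec u v w ≤ 0 := by
  rw [dvec, if_neg h2, if_neg h1]
  split_ifs <;> norm_num

lemma alpha_nonneg (u v : V) : 0 ≤ alphaUV D u v := by
  rw [alphaUV]; split_ifs <;> norm_num

lemma alpha_le_two (u v : V) : alphaUV D u v ≤ 2 := by
  rw [alphaUV]; split_ifs <;> norm_num

lemma dvec_le_alpha (u v w : V) : D.dvec u v w ≤ alphaUV D u v := by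
  rw [alphaUV]
  split_ifs with hi hu
  · exact D.dvec_le_two u v w
  · have h1 : ¬ D.Adj u w = true := by
      intro hc
      have : w ∈ D.outN u ∪ D.inN v := Finset.mem_union_left _ (D.mem_outN.2 hc)
      rw [hu] at this; exact absurd this (Finset.notMem_empty w)
    have h2 : ¬ D.Adj w v = true := by
      intro hc
      have : w ∈ D.outN u ∪ D.inN v := Finset.mem_union_right _ (D.mem_inN.2 hc)
      rw [hu] at this; exact absurd this (Finset.notMem_empty w)
    exact D.dvec_nonpos h1 h2
  · refine D.dvec_le_one fun ⟨ha, hb⟩ => hi ⟨w, Finset.mem_inter.2 ⟨D.mem_outN.2 ha, D.mem_inN.2 hb⟩⟩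

lemma payoff_shiftP_le [Nonempty V] {p : V → ℝ} {u v : V} (huv : u ≠ v)
    (hp : ∀ x, 0 ≤ p x) :
    D.payoff (shiftP p u v) ≤ D.payoff p + p u * alphaUV D u v := by
  refine D.payoff_le_s5 _ _ fun w => ?_
  rw [D.fpay_shiftP huv]
  have h1 := D.fpay_le_payoff p w
  have h2 : p u * D.dvec u v w ≤ p u * alphaUV D u v :=
    mul_le_mul_of_nonneg_left (D.dvec_le_alpha u v w) (hp u)
  linarith

/-- When `N⁺(u) = ∅` and `N⁻(v) = ∅`, the shifted payoff is at most `1 - p u`. -/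
lemma payoff_shiftP_le_alpha_zero [Nonempty V] {p : V → ℝ} {u v : V} (huv : u ≠ v)
    (hp : ∀ x, 0 ≤ p x) (hs : ∑ x, p x = 1)
    (hiv : ∀ w, ¬ D.Adj w v = true) :
    D.payoff (shiftP p u v) ≤ 1 - p u := by
  refine D.payoff_le_s5 _ _ fun w => ?_
  have hout : ∑ x ∈ D.outN w, shiftP p u v x ≤ ∑ x ∈ Finset.univ.erase v, shiftP p u v x := by
    refine Finset.sum_le_sum_of_subset_of_nonneg ?_ (fun x _ _ => shiftP_nonneg hp u v x)
    intro x hx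
    refine Finset.mem_erase.2 ⟨?_, Finset.mem_univ x⟩
    intro hxv; subst hxv
    exact hiv w (D.mem_outN.1 hx)
  have herase : ∑ x ∈ Finset.univ.erase v, shiftP p u v x = 1 - (p v + p u) := by
    have := Finset.add_sum_erase Finset.univ (shiftP p u v) (Finset.mem_univ v)
    have h1 : shiftP p u v v = p v + p u := by
      rw [shiftP, if_neg (Ne.symm huv), if_pos rfl]
    rw [sum_shiftP_univ huv hs] at this
    linarith [this, h1]
  have hin : 0 ≤ ∑ x ∈ D.inN w, shiftP p u v x :=
    Finset.sum_nonneg fun x _ => shiftP_nonneg hp u v x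
  rw [fpay]
  have hpv := hp v
  calc (∑ x ∈ D.outN w, shiftP p u v x) - ∑ x ∈ D.inN w, shiftP p u v x
      ≤ ∑ x ∈ Finset.univ.erase v, shiftP p u v x := by linarith
    _ = 1 - (p v + p u) := herase
    _ ≤ 1 - p u := by linarith

lemma payoff_ge_of_inN {p : V → ℝ} [Nonempty V] {u w0 : V} (hw0 : D.Adj w0 u = true)
    (hp : ∀ x, 0 ≤ p x) (hs : ∑ x, p x = 1) :
    2 * p u - 1 ≤ D.payoff p := by
  refine le_trans ?_ (D.fpay_le_payoff p w0)
  have hout : p u ≤ ∑ x ∈ D.outN w0, p x :=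
    Finset.single_le_sum (fun x _ => hp x) (D.mem_outN.2 hw0)
  have hin : ∑ x ∈ D.inN w0, p x ≤ 1 - p u := by
    have hsub : D.inN w0 ⊆ Finset.univ.erase u := by
      intro x hx
      refine Finset.mem_erase.2 ⟨?_, Finset.mem_univ x⟩
      intro hxu; subst hxu
      have h2 := D.asymm w0 x hw0
      have h3 := D.mem_inN.1 hx
      rw [h3] at h2; simp at h2
    have h1 : ∑ x ∈ Finset.univ.erase u, p x = 1 - p u := by
      have := Finset.add_sum_erase Finset.univ p (Finset.mem_univ u)
      rw [hs] at this; linarith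
    calc ∑ x ∈ D.inN w0, p x ≤ ∑ x ∈ Finset.univ.erase u, p x :=
          Finset.sum_le_sum_of_subset_of_nonneg hsub (fun x _ _ => hp x)
      _ = 1 - p u := h1
  rw [fpay]; linarith

end Digraph'
namespace Digraph'
set_option linter.unusedSectionVars false

variable {V : Type} [Fintype V] [DecidableEq V] (D : Digraph' V)

/-- Decrease the restriction vector at `u` by one. -/
def dec (r : V → ℕ) (u : V) : V → ℕ := fun w => r w - if w = u then 1 else 0

lemma sum_dec {r : V → ℕ} {u : V} (h : r u ≠ 0) :
    (∑ w, dec r u w) + 1 = ∑ w, r w := by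
  rw [← Finset.add_sum_erase Finset.univ (dec r u) (Finset.mem_univ u),
      ← Finset.add_sum_erase Finset.univ r (Finset.mem_univ u)]
  have h1 : ∑ w ∈ Finset.univ.erase u, dec r u w = ∑ w ∈ Finset.univ.erase u, r w :=
    Finset.sum_congr rfl fun w hw => by
      have hne : w ≠ u := (Finset.mem_erase.1 hw).1
      simp [dec, hne]
  rw [h1]
  have h2 : dec r u u = r u - 1 := by simp [dec]
  omega

/-- The set over which the infimum defining the game value is taken. -/
noncomputable def valueSet (r : V → ℕ) : Set ℝ :=
  { x : ℝ | ∃ p : V → ℝ, (∀ u, 0 ≤ p u) ∧ (∑ u, p u = 1) ∧ (∀ u, p u ≠ 0 → r u ≠ 0) ∧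
      x = D.payoff p + ∑ u, p u * D.value (dec r u) }

lemma sum_valueAux_eq {r : V → ℕ} {n : ℕ} (hn : ∑ w, r w = n + 1) (p : V → ℝ)
    (hsupp : ∀ u, p u ≠ 0 → r u ≠ 0) :
    ∑ u, p u * D.valueAux n (dec r u) = ∑ u, p u * D.value (dec r u) := by
  refine Finset.sum_congr rfl fun x _ => ?_
  by_cases hx : p x = 0
  · rw [hx, zero_mul, zero_mul]
  · have hrx := hsupp x hx
    have hsd : ∑ w, dec r x w = n := by
      have := sum_dec (r := r) (u := x) hrx; omega
    rw [value, hsd]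

lemma value_eq_sInf {r : V → ℕ} (h : ¬ ∀ u, r u = 0) :
    D.value r = sInf (D.valueSet r) := by
  obtain ⟨u0, hu0⟩ := not_forall.1 h
  have hsum : ∑ w, r w ≠ 0 := fun hc =>
    hu0 (Finset.sum_eq_zero_iff.1 hc u0 (Finset.mem_univ u0))
  obtain ⟨n, hn⟩ : ∃ n, ∑ w, r w = n + 1 := ⟨(∑ w, r w) - 1, by omega⟩
  rw [value, hn, valueAux, if_neg h]
  congr 1
  ext x
  constructor
  · rintro ⟨p, hp, hs, hsupp, rfl⟩
    refine ⟨p, hp, hs, hsupp, ?_⟩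
    show D.payoff p + ∑ u, p u * D.valueAux n (dec r u)
        = D.payoff p + ∑ u, p u * D.value (dec r u)
    rw [D.sum_valueAux_eq hn p hsupp]
  · rintro ⟨p, hp, hs, hsupp, rfl⟩
    refine ⟨p, hp, hs, hsupp, ?_⟩
    show D.payoff p + ∑ u, p u * D.value (dec r u)
        = D.payoff p + ∑ u, p u * D.valueAux n (dec r u)
    rw [D.sum_valueAux_eq hn p hsupp]

lemma mem_valueSet {r : V → ℕ} (p : V → ℝ) (hp : ∀ u, 0 ≤ p u) (hs : ∑ u, p u = 1)
    (hsupp : ∀ u, p u ≠ 0 → r u ≠ 0) :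
    D.payoff p + ∑ u, p u * D.value (dec r u) ∈ D.valueSet r := ⟨p, hp, hs, hsupp, rfl⟩

lemma valueSet_nonempty {r : V → ℕ} (h : ¬ ∀ u, r u = 0) : (D.valueSet r).Nonempty := by
  obtain ⟨u0, hu0⟩ := not_forall.1 h
  refine ⟨_, fun x => if x = u0 then (1 : ℝ) else 0, fun x => ?_, by simp, fun x hx => ?_, rfl⟩
  · dsimp only; split_ifs <;> norm_num
  · by_cases hxu : x = u0
    · exact hxu ▸ hu0
    · simp [hxu] at hx

lemma valueSet_bddBelow [Nonempty V] (r : V → ℕ) : BddBelow (D.valueSet r) := by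
  have hne : (Finset.univ.image fun u => D.value (dec r u)).Nonempty :=
    Finset.Nonempty.image Finset.univ_nonempty _
  set B := (Finset.univ.image fun u => D.value (dec r u)).min' hne with hB
  refine ⟨B - 1, fun x hx => ?_⟩
  obtain ⟨p, hp, hs, hsupp, rfl⟩ := hx
  have h1 : (-1 : ℝ) ≤ D.payoff p :=
    le_trans (D.neg_one_le_fpay hp hs (Classical.arbitrary V)) (D.fpay_le_payoff p _)
  have h2 : B ≤ ∑ u, p u * D.value (dec r u) := by
    have hBsum : ∑ u, p u * B = B := by rw [← Finset.sum_mul, hs, one_mul]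
    rw [← hBsum]
    refine Finset.sum_le_sum fun i _ => mul_le_mul_of_nonneg_left ?_ (hp i)
    exact Finset.min'_le _ _ (Finset.mem_image_of_mem _ (Finset.mem_univ i))
  linarith

end Digraph'
namespace Digraph'
set_option linter.unusedSectionVars false
set_option maxHeartbeats 1000000

variable {V : Type} [Fintype V] [DecidableEq V] (D : Digraph' V)

lemma dec_comm (r : V → ℕ) (a b : V) : dec (dec r a) b = dec (dec r b) a := by
  funext w
  simp only [dec]
  split_ifs <;> omega

lemma alpha_pos_of_inN {u : V} (h : D.inN u ≠ ∅) : 0 < alphaUV D u u := by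
  rw [alphaUV]
  split_ifs with h1 h2
  · norm_num
  · exact absurd (Finset.union_eq_empty.1 h2).2 h
  · norm_num

theorem value_switch_aux [Nonempty V] :
    ∀ n : ℕ, ∀ r : V → ℕ, (∑ w, r w) = n → ∀ u v : V, 1 ≤ r u → 1 ≤ r v →
      (D.value (dec r u) ≤ D.value (dec r v) + alphaUV D u v ∧
       ((D.inN u ≠ ∅ ∨ alphaUV D u v = 2) →
         D.value (dec r u) < D.value (dec r v) + alphaUV D u v)) := by
  intro n
  induction n using Nat.strong_induction_on with
  | _ n IH =>
  intro r hr u v hu hv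
  rcases eq_or_ne u v with rfl | huv
  · refine ⟨le_add_of_nonneg_right (D.alpha_nonneg u u), fun H => lt_add_of_pos_right _ ?_⟩
    rcases H with H | H
    · exact D.alpha_pos_of_inN H
    · rw [H]; norm_num
  -- now u ≠ v
  have hn1 : 1 ≤ n := by
    have := Finset.single_le_sum (f := r) (fun i _ => Nat.zero_le _) (Finset.mem_univ u)
    omega
  have hdu : dec r u v = r v := by simp [dec, Ne.symm huv]
  have hdv : dec r v u = r u := by simp [dec, huv]
  have hune : ¬ ∀ w, dec r u w = 0 := by
    intro hall; have := hall v; rw [hdu] at this; omega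
  have hvne : ¬ ∀ w, dec r v w = 0 := by
    intro hall; have := hall u; rw [hdv] at this; omega
  -- induction hypothesis applied at dec r y
  have hIHS : ∀ y, y ≠ u → dec r v y ≠ 0 →
      (D.value (dec (dec r u) y) ≤ D.value (dec (dec r v) y) + alphaUV D u v ∧
       ((D.inN u ≠ ∅ ∨ alphaUV D u v = 2) →
         D.value (dec (dec r u) y) < D.value (dec (dec r v) y) + alphaUV D u v)) := by
    intro y hyu hyv
    have hry : r y ≠ 0 := by
      have h1 : dec r v y ≤ r y := Nat.sub_le _ _
      omega
    have hm := sum_dec (r := r) (u := y) hry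
    have h1u : 1 ≤ dec r y u := by
      have : dec r y u = r u := by simp [dec, Ne.symm hyu]
      omega
    have h1v : 1 ≤ dec r y v := by
      by_cases hyv' : y = v
      · subst hyv'
        have h2 : dec r y y = r y - 1 := by simp [dec]
        have h3 : dec r y y ≠ 0 := hyv
        omega
      · have : dec r y v = r v := by simp [dec, Ne.symm hyv']
        omega
    have hres := IH (∑ w, dec r y w) (by omega) (dec r y) rfl u v h1u h1v
    rw [dec_comm r y u, dec_comm r y v] at hres
    exact hres
  -- the uniform gap
  set α := alphaUV D u v with hα
  set S : Finset V := Finset.univ.filter (fun y => y ≠ u ∧ dec r v y ≠ 0) with hS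
  set gfun : V → ℝ := fun y =>
    D.value (dec (dec r v) y) + α - D.value (dec (dec r u) y) with hgfun
  set G : Finset ℝ := insert 1 (S.image gfun) with hG
  have hGne : G.Nonempty := Finset.insert_nonempty _ _
  set g : ℝ := G.min' hGne with hg
  have hg1 : g ≤ 1 := Finset.min'_le _ _ (Finset.mem_insert_self _ _)
  have hgS : ∀ y ∈ S, g ≤ gfun y := fun y hy =>
    Finset.min'_le _ _ (Finset.mem_insert_of_mem (Finset.mem_image_of_mem _ hy))
  have hgpos : (D.inN u ≠ ∅ ∨ α = 2) → 0 < g := by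
    intro H
    rw [hg]
    refine (Finset.lt_min'_iff _ _).2 fun y hy => ?_
    rcases Finset.mem_insert.1 hy with rfl | hy
    · norm_num
    · obtain ⟨z, hz, rfl⟩ := Finset.mem_image.1 hy
      obtain ⟨hzu, hzv⟩ := (Finset.mem_filter.1 hz).2
      have := (hIHS z hzu hzv).2 H
      rw [hgfun]
      dsimp only
      linarith
  -- the central estimate, per element of the value set
  have main : ∀ x ∈ D.valueSet (dec r v),
      D.value (dec r u) ≤ x + α ∧
      ((D.inN u ≠ ∅ ∨ α = 2) → D.value (dec r u) + g / 3 ≤ x + α) := by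
    rintro x ⟨p, hp, hs, hsupp, rfl⟩
    set q : V → ℝ := shiftP p u v with hqdef
    have hq0 : ∀ y, 0 ≤ q y := shiftP_nonneg hp u v
    have hq1 : ∑ y, q y = 1 := sum_shiftP_univ huv hs
    have hqsupp : ∀ y, q y ≠ 0 → dec r u y ≠ 0 := by
      intro y hy
      by_cases hyu : y = u
      · exfalso; apply hy; rw [hqdef]; subst hyu; simp [shiftP]
      · by_cases hyv : y = v
        · subst hyv; rw [hdu]; omega
        · have hqy : q y = p y := by rw [hqdef]; simp [shiftP, hyu, hyv]
          have hpy : p y ≠ 0 := by rw [← hqy]; exact hy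
          have h1 : dec r v y ≠ 0 := hsupp y hpy
          have h2 : dec r v y = r y := by simp [dec, hyv]
          have h3 : dec r u y = r y := by simp [dec, hyu]
          omega
    have hpu1 : p u ≤ 1 := by
      have h1 := Finset.single_le_sum (f := p) (fun i _ => hp i) (Finset.mem_univ u)
      linarith
    -- value(dec r u) is at most the q-element of its value set
    have hvalA : D.value (dec r u) ≤ D.payoff q + ∑ y, q y * D.value (dec (dec r u) y) := by
      rw [D.value_eq_sInf hune]
      exact csInf_le (D.valueSet_bddBelow _) (D.mem_valueSet q hq0 hq1 hqsupp)
    -- decompose the q-sum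
    have hWV : D.value (dec (dec r u) v) = D.value (dec (dec r v) u) := by
      rw [dec_comm]
    have hq_decomp : ∑ y, q y * D.value (dec (dec r u) y)
        = (∑ y ∈ Finset.univ.erase u, p y * D.value (dec (dec r u) y))
          + p u * D.value (dec (dec r v) u) := by
      have h1 := sum_shiftP_mul (p := p) huv Finset.univ (fun y => D.value (dec (dec r u) y))
      have h2 := Finset.add_sum_erase Finset.univ
        (fun y => p y * D.value (dec (dec r u) y)) (Finset.mem_univ u)
      simp only [Finset.mem_univ, if_pos] at h1
      rw [hqdef]
      rw [h1, ← h2, hWV]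
      ring
    have hV_decomp : ∑ y, p y * D.value (dec (dec r v) y)
        = p u * D.value (dec (dec r v) u)
          + ∑ y ∈ Finset.univ.erase u, p y * D.value (dec (dec r v) y) := by
      exact (Finset.add_sum_erase Finset.univ
        (fun y => p y * D.value (dec (dec r v) y)) (Finset.mem_univ u)).symm
    have hsump : ∑ y ∈ Finset.univ.erase u, p y = 1 - p u := by
      have h2 := Finset.add_sum_erase Finset.univ p (Finset.mem_univ u)
      rw [hs] at h2; linarith
    -- termwise bounds on the erased sum
    have e1 : ∑ y ∈ Finset.univ.erase u, p y * D.value (dec (dec r u) y)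
        ≤ (∑ y ∈ Finset.univ.erase u, p y * D.value (dec (dec r v) y)) + (1 - p u) * α := by
      have hterm : ∀ y ∈ Finset.univ.erase u,
          p y * D.value (dec (dec r u) y) ≤ p y * D.value (dec (dec r v) y) + p y * α := by
        intro y hy
        have hyu : y ≠ u := (Finset.mem_erase.1 hy).1
        by_cases hpy : p y = 0
        · rw [hpy]; simp
        · have h1 := (hIHS y hyu (hsupp y hpy)).1
          have h2 := mul_le_mul_of_nonneg_left h1 (hp y)
          rw [mul_add] at h2
          linarith
      calc ∑ y ∈ Finset.univ.erase u, p y * D.value (dec (dec r u) y)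
          ≤ ∑ y ∈ Finset.univ.erase u,
              (p y * D.value (dec (dec r v) y) + p y * α) := Finset.sum_le_sum hterm
        _ = (∑ y ∈ Finset.univ.erase u, p y * D.value (dec (dec r v) y))
              + (∑ y ∈ Finset.univ.erase u, p y) * α := by
            rw [Finset.sum_add_distrib, ← Finset.sum_mul]
        _ = _ := by rw [hsump]
    have e2 : ∑ y ∈ Finset.univ.erase u, p y * D.value (dec (dec r u) y)
        ≤ (∑ y ∈ Finset.univ.erase u, p y * D.value (dec (dec r v) y))
          + (1 - p u) * (α - g) := by
      have hterm : ∀ y ∈ Finset.univ.erase u,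
          p y * D.value (dec (dec r u) y)
            ≤ p y * D.value (dec (dec r v) y) + p y * (α - g) := by
        intro y hy
        have hyu : y ≠ u := (Finset.mem_erase.1 hy).1
        by_cases hpy : p y = 0
        · rw [hpy]; simp
        · have hyS : y ∈ S := by
            rw [hS]; exact Finset.mem_filter.2 ⟨Finset.mem_univ y, hyu, hsupp y hpy⟩
          have h1 := hgS y hyS
          rw [hgfun] at h1
          dsimp only at h1
          have h2 : D.value (dec (dec r u) y) ≤ D.value (dec (dec r v) y) + (α - g) := by
            linarith
          have h3 := mul_le_mul_of_nonneg_left h2 (hp y)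
          rw [mul_add] at h3
          linarith
      calc ∑ y ∈ Finset.univ.erase u, p y * D.value (dec (dec r u) y)
          ≤ ∑ y ∈ Finset.univ.erase u,
              (p y * D.value (dec (dec r v) y) + p y * (α - g)) := Finset.sum_le_sum hterm
        _ = (∑ y ∈ Finset.univ.erase u, p y * D.value (dec (dec r v) y))
              + (∑ y ∈ Finset.univ.erase u, p y) * (α - g) := by
            rw [Finset.sum_add_distrib, ← Finset.sum_mul]
        _ = _ := by rw [hsump]
    -- payoff bounds
    have epay : D.payoff q ≤ D.payoff p + p u * α := D.payoff_shiftP_le huv hp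
    constructor
    · -- non-strict bound
      linarith [hvalA, hq_decomp, hV_decomp, e1, epay, hp u]
    · -- strict bound
      intro H
      have hgp : 0 < g := hgpos H
      have epay2 : D.payoff q ≤ D.payoff p + p u * α - 3 * p u + 2 := by
        by_cases hint : (D.outN u ∩ D.inN v).Nonempty
        · have hα2 : α = 2 := by rw [hα, alphaUV, if_pos hint]
          have h1 : 0 ≤ D.payoff p := D.payoff_nonneg hp hs
          have h2 : D.payoff q ≤ 1 := D.payoff_le_one hq0 hq1
          rw [hα2]; linarith
        · have hinu : D.inN u ≠ ∅ := by
            rcases H with H | H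
            · exact H
            · exfalso
              rw [hα, alphaUV, if_neg hint] at H
              split_ifs at H <;> norm_num at H
          obtain ⟨w0, hw0⟩ := Finset.nonempty_iff_ne_empty.2 hinu
          have hw0' : D.Adj w0 u = true := D.mem_inN.1 hw0
          have h1 : 2 * p u - 1 ≤ D.payoff p := D.payoff_ge_of_inN hw0' hp hs
          by_cases hun : D.outN u ∪ D.inN v = ∅
          · have hα0 : α = 0 := by rw [hα, alphaUV, if_neg hint, if_pos hun]
            have hiv : ∀ w, ¬ D.Adj w v = true := by
              intro w hc
              have : w ∈ D.outN u ∪ D.inN v := Finset.mem_union_right _ (D.mem_inN.2 hc)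
              rw [hun] at this; exact absurd this (Finset.notMem_empty w)
            have h2 : D.payoff q ≤ 1 - p u := D.payoff_shiftP_le_alpha_zero huv hp hs hiv
            rw [hα0]; linarith
          · have hα1 : α = 1 := by rw [hα, alphaUV, if_neg hint, if_neg hun]
            have h2 : D.payoff q ≤ 1 := D.payoff_le_one hq0 hq1
            rw [hα1]; linarith
      -- combine
      rcases le_or_gt (p u) (2/3) with hcase | hcase
      · -- use epay and e2 : slack (1 - p u) * g ≥ g / 3
        nlinarith [hvalA, hq_decomp, hV_decomp, e2, epay, hp u, hgp, hg1]
      · nlinarith [hvalA, hq_decomp, hV_decomp, e2, epay2, hp u, hgp, hg1, hpu1]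
  -- conclude
  rw [D.value_eq_sInf hvne]
  have hne := D.valueSet_nonempty hvne
  constructor
  · have h1 : D.value (dec r u) - α ≤ sInf (D.valueSet (dec r v)) :=
      le_csInf hne fun x hx => by linarith [(main x hx).1]
    linarith
  · intro H
    have hgp : 0 < g := hgpos H
    have h1 : D.value (dec r u) + g / 3 - α ≤ sInf (D.valueSet (dec r v)) :=
      le_csInf hne fun x hx => by linarith [(main x hx).2 H]
    linarith

end Digraph'
theorem value_switch {V : Type} [Fintype V] [DecidableEq V] [Nonempty V]
    (D : Digraph' V) (u v : V) (r : V → ℕ) (hu : 1 ≤ r u) (hv : 1 ≤ r v) :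
    D.value (fun w => r w - if w = u then 1 else 0)
        ≤ D.value (fun w => r w - if w = v then 1 else 0) + alphaUV D u v ∧
    ((D.inN u ≠ ∅ ∨ alphaUV D u v = 2) →
      D.value (fun w => r w - if w = u then 1 else 0)
        < D.value (fun w => r w - if w = v then 1 else 0) + alphaUV D u v) := by
  exact D.value_switch_aux (∑ w, r w) r rfl u v hu hv
end

section
/- Let D be the directed path on vertices {1,2,3} with arcs (1,2) and (2,3). A strategy R for Rei in the semi-restricted D-game is optimal if and only if R(r)_3 = 1/2 for every restriction vector r such that 3 ∈ supp(r) and supp(r) ≠ {3}. -/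
open Finset

/-- The directed path 0 → 1 → 2 on three vertices. -/
def P3 : Digraph' (Fin 3) where
  Adj i j := decide ((i = 0 ∧ j = 1) ∨ (i = 1 ∧ j = 2))
  irrefl := by decide
  asymm := by decide

/-!
Write `s = r 0 + r 1` and `c = r 2`, and let `coinValue s c` be the expected size of the second
pile at the moment one of two piles of sizes `s` and `c` becomes empty, when in each round a fair
coin decides which pile loses a token. The value of the path game is `coinValue s c + r 1`.

For a move `p` the payoff is `p 1 + max 0 (2 p 2 - 1)`, and the one-step Bellman excess of this
function is `max 0 (2 t) - t d`, where `t = p 2 - 1/2` and `d = coinValue (s-1) c - coinValue s (c-1)`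
lies in `(0, 2)` as soon as `s, c > 0`; otherwise the excess is `0`. Hence the function solves the
Bellman equation, and when `s, c > 0` a move attains the minimum exactly when `p 2 = 1/2`. A strategy
is optimal iff it attains the minimum at every nonzero restriction vector.
-/

namespace Digraph'

variable {V : Type} [Fintype V] [DecidableEq V]

def IsMove (r : V → ℕ) (p : V → ℝ) : Prop :=
  (∀ u, 0 ≤ p u) ∧ ∑ u, p u = 1 ∧ ∀ u, p u ≠ 0 → r u ≠ 0

lemma isMove_single {r : V → ℕ} {u : V} (hu : r u ≠ 0) : IsMove r (Pi.single u 1) := by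
  refine ⟨fun w => ?_, by simp, fun w hw => ?_⟩
  · by_cases h : w = u <;> simp [h]
  · by_cases h : w = u
    · rwa [h]
    · simp [h] at hw

omit [DecidableEq V] in
lemma convex_isMove (r : V → ℕ) : Convex ℝ {p | IsMove r p} := by
  rintro p ⟨hp0, hp1, hpr⟩ q ⟨hq0, hq1, hqr⟩ a b ha hb hab
  refine ⟨fun u => ?_, ?_, fun u hu => ?_⟩
  · simp only [Pi.add_apply, Pi.smul_apply, smul_eq_mul]
    have := hp0 u; have := hq0 u; positivity
  · simp [Finset.sum_add_distrib, ← Finset.mul_sum, hp1, hq1, hab]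
  · by_contra hr
    have hpu : p u = 0 := by_contra fun h => hpr u h hr
    have hqu : q u = 0 := by_contra fun h => hqr u h hr
    simp [hpu, hqu] at hu

omit [Fintype V] [DecidableEq V] in
lemma ne_zero_iff_not_forall (r : V → ℕ) : r ≠ 0 ↔ ¬ ∀ u, r u = 0 := by
  simp [funext_iff]

omit [Fintype V] in
lemma sub_single_eq (r : V → ℕ) (u : V) :
    (fun w => r w - if w = u then 1 else 0) = r - Pi.single u 1 := by
  funext w
  simp [Pi.single_apply]

lemma sum_sub_single_add_one {r : V → ℕ} {u : V} (hu : r u ≠ 0) :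
    ∑ w, (r - Pi.single u 1 : V → ℕ) w + 1 = ∑ w, r w := by
  have hr : r = (r - Pi.single u 1) + Pi.single u 1 := by
    funext w
    by_cases h : w = u
    · subst h; simp; omega
    · simp [h]
  conv_rhs => rw [hr]
  simp [Finset.sum_add_distrib]

theorem induction_on_sub_single {P : (V → ℕ) → Prop} (zero : P 0)
    (step : ∀ r ≠ 0, (∀ u, r u ≠ 0 → P (r - Pi.single u 1)) → P r) (r : V → ℕ) : P r := by
  induction hn : ∑ u, r u using Nat.strong_induction_on generalizing r with
  | _ n ih =>
    rcases eq_or_ne r 0 with rfl | hr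
    · exact zero
    · refine step r hr fun u hu => ih _ ?_ _ rfl
      have := sum_sub_single_add_one hu
      omega

variable (D : Digraph' V)

noncomputable def bellman (F : (V → ℕ) → ℝ) (r : V → ℕ) (p : V → ℝ) : ℝ :=
  D.payoff p + ∑ u, p u * F (r - Pi.single u 1)

lemma bellman_congr {F G : (V → ℕ) → ℝ} {r : V → ℕ} {p : V → ℝ}
    (hp : ∀ u, p u ≠ 0 → r u ≠ 0)
    (hFG : ∀ u, r u ≠ 0 → F (r - Pi.single u 1) = G (r - Pi.single u 1)) :
    D.bellman F r p = D.bellman G r p := by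
  unfold bellman
  congr 1
  refine Finset.sum_congr rfl fun u _ => ?_
  by_cases h : p u = 0
  · simp [h]
  · rw [hFG u (hp u h)]

lemma value_zero : D.value 0 = 0 := by
  simp [value, valueAux]

-- The fuel of the recursive call is the total of every `r - δ_u` reached with positive probability.
lemma value_eq_sInf_s6 {r : V → ℕ} (hr : r ≠ 0) :
    D.value r = sInf (D.bellman D.value r '' {p | IsMove r p}) := by
  obtain ⟨u₀, hu₀⟩ : ∃ u, r u ≠ 0 := Function.ne_iff.1 hr
  obtain ⟨n, hn⟩ : ∃ n, ∑ u, r u = n + 1 :=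
    ⟨∑ u, r u - 1, by have := sum_sub_single_add_one hu₀; omega⟩
  have hfuel (p : V → ℝ) (hp : IsMove r p) :
      D.bellman D.value r p = D.bellman (D.valueAux n) r p :=
    D.bellman_congr hp.2.2 fun u hu => by
      have := sum_sub_single_add_one hu
      rw [Digraph'.value, show ∑ w, (r - Pi.single u 1 : V → ℕ) w = n by omega]
  rw [value, hn, valueAux, if_neg ((ne_zero_iff_not_forall r).1 hr)]
  congr 1
  ext x
  simp only [Set.mem_ofPred_eq, Set.mem_image, sub_single_eq]
  refine exists_congr fun p => ⟨fun ⟨h0, h1, h2, hx⟩ => ⟨⟨h0, h1, h2⟩, ?_⟩,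
    fun ⟨hp, hx⟩ => ⟨hp.1, hp.2.1, hp.2.2, ?_⟩⟩
  · rw [hfuel p ⟨h0, h1, h2⟩, hx, bellman]
  · rw [← hx, hfuel p hp, bellman]

lemma value_eq_of_isLeast {F : (V → ℕ) → ℝ} (h0 : F 0 = 0)
    (hF : ∀ r ≠ 0, IsLeast (D.bellman F r '' {p | IsMove r p}) (F r)) : D.value = F := by
  funext r
  induction r using induction_on_sub_single with
  | zero => rw [value_zero, h0]
  | step r hr ih =>
    rw [value_eq_sInf_s6 D hr, ← (hF r hr).csInf_eq]
    exact congrArg sInf (Set.image_congr fun p hp => D.bellman_congr hp.2.2 ih)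

variable {D} in
lemma isMove_play (R : ReiStrategy D) {r : V → ℕ} (hr : r ≠ 0) : IsMove r (R.play r) :=
  have h := (ne_zero_iff_not_forall r).1 hr
  ⟨R.nonneg r h, R.sum_one r h, R.supp r h⟩

lemma stratValue_zero (R : ReiStrategy D) : D.stratValue R 0 = 0 := by
  simp [stratValue, stratValueAux]

lemma stratValue_eq_bellman (R : ReiStrategy D) {r : V → ℕ} (hr : r ≠ 0) :
    D.stratValue R r = D.bellman (D.stratValue R) r (R.play r) := by
  obtain ⟨u₀, hu₀⟩ : ∃ u, r u ≠ 0 := Function.ne_iff.1 hr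
  obtain ⟨n, hn⟩ : ∃ n, ∑ u, r u = n + 1 :=
    ⟨∑ u, r u - 1, by have := sum_sub_single_add_one hu₀; omega⟩
  rw [stratValue, hn, stratValueAux, if_neg ((ne_zero_iff_not_forall r).1 hr)]
  simp only [sub_single_eq]
  refine (D.bellman_congr (isMove_play R hr).2.2 fun u hu => ?_).symm
  have := sum_sub_single_add_one hu
  rw [stratValue, show ∑ w, (r - Pi.single u 1 : V → ℕ) w = n by omega]

theorem isOptimal_iff (R : ReiStrategy D) :
    D.IsOptimal R ↔ ∀ r ≠ 0, D.bellman D.value r (R.play r) = D.value r := by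
  refine ⟨fun hR r hr => ?_, fun h r => ?_⟩
  · have hR' : D.stratValue R = D.value := funext hR
    rw [← hR', ← stratValue_eq_bellman D R hr]
  · induction r using induction_on_sub_single with
    | zero => rw [value_zero, stratValue_zero]
    | step r hr ih =>
      rw [stratValue_eq_bellman D R hr, ← h r hr]
      exact D.bellman_congr (isMove_play R hr).2.2 ih

end Digraph'

noncomputable def coinValue : ℕ → ℕ → ℝ
  | 0, c => c
  | _ + 1, 0 => 0
  | s + 1, c + 1 => (coinValue s (c + 1) + coinValue (s + 1) c) / 2

@[simp]
lemma coinValue_zero_left (c : ℕ) : coinValue 0 c = c := by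
  simp [coinValue]

@[simp]
lemma coinValue_zero_right (s : ℕ) : coinValue s 0 = 0 := by
  cases s <;> simp [coinValue]

lemma coinValue_succ_succ (s c : ℕ) :
    coinValue (s + 1) (c + 1) = (coinValue s (c + 1) + coinValue (s + 1) c) / 2 := by
  simp [coinValue]

lemma coinValue_succ_right_sub_mem (s c : ℕ) :
    coinValue s (c + 1) - coinValue s c ∈ Set.Ioc 0 1 := by
  induction s generalizing c with
  | zero => simp
  | succ s ihs =>
    induction c with
    | zero =>
      have := ihs 0
      simp only [coinValue_succ_succ, coinValue_zero_right, Set.mem_Ioc] at this ⊢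
      constructor <;> linarith
    | succ c ihc =>
      have := ihs (c + 1)
      simp only [coinValue_succ_succ s (c + 1), coinValue_succ_succ s c, Set.mem_Ioc] at this ihc ⊢
      constructor <;> linarith

lemma coinValue_sub_succ_left_mem (s c : ℕ) :
    coinValue s c - coinValue (s + 1) c ∈ Set.Ico 0 1 := by
  induction s generalizing c with
  | zero =>
    induction c with
    | zero => simp
    | succ c ihc =>
      simp only [coinValue_succ_succ 0 c, coinValue_zero_left, Set.mem_Ico] at ihc ⊢
      push_cast at ihc ⊢
      constructor <;> linarith
  | succ s ihs =>
    induction c with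
    | zero => simp
    | succ c ihc =>
      have := ihs (c + 1)
      simp only [coinValue_succ_succ s c, coinValue_succ_succ (s + 1) c, Set.mem_Ico] at this ihc ⊢
      constructor <;> linarith

lemma coinValue_pred_sub_mem_Ioo {s c : ℕ} (hs : s ≠ 0) (hc : c ≠ 0) :
    coinValue (s - 1) c - coinValue s (c - 1) ∈ Set.Ioo 0 2 := by
  obtain ⟨s, rfl⟩ := Nat.exists_eq_succ_of_ne_zero hs
  obtain ⟨c, rfl⟩ := Nat.exists_eq_succ_of_ne_zero hc
  have h₁ := coinValue_succ_right_sub_mem s c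
  have h₂ := coinValue_sub_succ_left_mem s c
  simp only [Nat.succ_sub_one, Set.mem_Ioc, Set.mem_Ico, Set.mem_Ioo] at h₁ h₂ ⊢
  constructor <;> linarith

lemma mul_le_max_zero_two_mul {t d : ℝ} (hd₀ : 0 ≤ d) (hd₂ : d ≤ 2) :
    t * d ≤ max 0 (2 * t) := by
  rcases le_total t 0 with ht | ht
  · exact (mul_nonpos_of_nonpos_of_nonneg ht hd₀).trans (le_max_left _ _)
  · exact (mul_le_mul_of_nonneg_left hd₂ ht).trans (by rw [mul_comm]; exact le_max_right _ _)

lemma mul_lt_max_zero_two_mul {t d : ℝ} (hd₀ : 0 < d) (hd₂ : d < 2) (ht : t ≠ 0) :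
    t * d < max 0 (2 * t) := by
  rcases ht.lt_or_gt with ht | ht
  · exact (mul_neg_of_neg_of_pos ht hd₀).trans_le (le_max_left _ _)
  · exact (mul_lt_mul_of_pos_left hd₂ ht).trans_le (by rw [mul_comm]; exact le_max_right _ _)

lemma P3_arcBalance (p : Fin 3 → ℝ) (v : Fin 3) :
    (∑ u ∈ P3.outN v, p u) - ∑ u ∈ P3.inN v, p u = ![p 1, p 2 - p 0, -p 1] v := by
  fin_cases v <;> simp [Digraph'.outN, Digraph'.inN, Finset.sum_filter, P3]

lemma P3_payoff {r : Fin 3 → ℕ} {p : Fin 3 → ℝ} (hp : Digraph'.IsMove r p) :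
    P3.payoff p = p 1 + max 0 (2 * p 2 - 1) := by
  obtain ⟨hp0, hp1, -⟩ := hp
  have h0 := hp0 0; have h1 := hp0 1
  rw [Fin.sum_univ_three] at hp1
  rw [Digraph'.payoff, funext (P3_arcBalance p)]
  refine IsGreatest.csSup_eq ⟨?_, ?_⟩
  · rcases le_total (2 * p 2 - 1) 0 with h | h
    · exact ⟨0, by simp [max_eq_left h]⟩
    · exact ⟨1, by simp only [Matrix.cons_val_one, Matrix.cons_val_zero, max_eq_right h]; linarith⟩
  · rintro _ ⟨v, rfl⟩
    have := le_max_left 0 (2 * p 2 - 1); have := le_max_right 0 (2 * p 2 - 1)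
    fin_cases v <;> simp <;> linarith

noncomputable def pathValue (r : Fin 3 → ℕ) : ℝ := coinValue (r 0 + r 1) (r 2) + r 1

lemma pathValue_zero : pathValue 0 = 0 := by
  simp [pathValue]

lemma pathValue_sub_single_zero {r : Fin 3 → ℕ} (h : r 0 ≠ 0) :
    pathValue (r - Pi.single 0 1) = coinValue (r 0 + r 1 - 1) (r 2) + r 1 := by
  simp [pathValue, show r 0 - 1 + r 1 = r 0 + r 1 - 1 by omega]

lemma pathValue_sub_single_one {r : Fin 3 → ℕ} (h : r 1 ≠ 0) :
    pathValue (r - Pi.single 1 1) = coinValue (r 0 + r 1 - 1) (r 2) + r 1 - 1 := by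
  simp [pathValue, Nat.cast_sub (Nat.one_le_iff_ne_zero.2 h),
    show r 0 + (r 1 - 1) = r 0 + r 1 - 1 by omega, add_sub_assoc]

lemma pathValue_sub_single_two (r : Fin 3 → ℕ) :
    pathValue (r - Pi.single 2 1) = coinValue (r 0 + r 1) (r 2 - 1) + r 1 := by
  simp [pathValue]

lemma bellman_pathValue {r : Fin 3 → ℕ} {p : Fin 3 → ℝ} (hp : Digraph'.IsMove r p) :
    P3.bellman pathValue r p = max 0 (2 * p 2 - 1) + (1 - p 2) * coinValue (r 0 + r 1 - 1) (r 2)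
      + p 2 * coinValue (r 0 + r 1) (r 2 - 1) + r 1 := by
  have hsupp := hp.2.2
  have hsum : p 0 + p 1 + p 2 = 1 := by rw [← Fin.sum_univ_three]; exact hp.2.1
  have h0 : p 0 * pathValue (r - Pi.single 0 1)
      = p 0 * (coinValue (r 0 + r 1 - 1) (r 2) + r 1) := by
    rcases eq_or_ne (p 0) 0 with h | h
    · simp [h]
    · rw [pathValue_sub_single_zero (hsupp 0 h)]
  have h1 : p 1 * pathValue (r - Pi.single 1 1)
      = p 1 * (coinValue (r 0 + r 1 - 1) (r 2) + r 1 - 1) := by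
    rcases eq_or_ne (p 1) 0 with h | h
    · simp [h]
    · rw [pathValue_sub_single_one (hsupp 1 h)]
  rw [Digraph'.bellman, P3_payoff hp, Fin.sum_univ_three, h0, h1, pathValue_sub_single_two]
  linear_combination (coinValue (r 0 + r 1 - 1) (r 2) + r 1) * hsum

lemma bellman_pathValue_of_degenerate {r : Fin 3 → ℕ} {p : Fin 3 → ℝ} (hp : Digraph'.IsMove r p)
    (h : r 2 = 0 ∨ r 0 + r 1 = 0) : P3.bellman pathValue r p = pathValue r := by
  have hsupp := hp.2.2
  have hsum : p 0 + p 1 + p 2 = 1 := by rw [← Fin.sum_univ_three]; exact hp.2.1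
  rw [bellman_pathValue hp, pathValue]
  rcases h with hc | hs
  · have hp2 : p 2 = 0 := by_contra fun h => hsupp 2 h hc
    simp [hc, hp2]
  · have hp0 : p 0 = 0 := by_contra fun h => hsupp 0 h (by omega)
    have hp1 : p 1 = 0 := by_contra fun h => hsupp 1 h (by omega)
    have hp2 : p 2 = 1 := by linarith
    have hc : 1 ≤ r 2 := Nat.one_le_iff_ne_zero.2 (hsupp 2 (by simp [hp2]))
    norm_num [hp2, Nat.cast_sub hc, show r 0 = 0 by omega, show r 1 = 0 by omega]

lemma bellman_pathValue_sub {r : Fin 3 → ℕ} {p : Fin 3 → ℝ} (hp : Digraph'.IsMove r p)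
    (hs : r 0 + r 1 ≠ 0) (hc : r 2 ≠ 0) :
    P3.bellman pathValue r p - pathValue r = max 0 (2 * (p 2 - 1 / 2))
      - (p 2 - 1 / 2) * (coinValue (r 0 + r 1 - 1) (r 2) - coinValue (r 0 + r 1) (r 2 - 1)) := by
  obtain ⟨s, hs'⟩ : ∃ s, r 0 + r 1 = s + 1 := ⟨r 0 + r 1 - 1, by omega⟩
  obtain ⟨c, hc'⟩ : ∃ c, r 2 = c + 1 := ⟨r 2 - 1, by omega⟩
  rw [bellman_pathValue hp, pathValue, hs', hc', coinValue_succ_succ]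
  simp only [Nat.add_sub_cancel]
  ring_nf

lemma bellman_pathValue_eq_iff {r : Fin 3 → ℕ} {p : Fin 3 → ℝ} (hp : Digraph'.IsMove r p) :
    P3.bellman pathValue r p = pathValue r ↔ (r 2 ≠ 0 → (r 0 ≠ 0 ∨ r 1 ≠ 0) → p 2 = 1 / 2) := by
  by_cases hdeg : r 2 = 0 ∨ r 0 + r 1 = 0
  · simp only [bellman_pathValue_of_degenerate hp hdeg, true_iff]
    omega
  · obtain ⟨hc, hs⟩ : r 2 ≠ 0 ∧ r 0 + r 1 ≠ 0 := not_or.1 hdeg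
    obtain ⟨hd₀, hd₂⟩ := coinValue_pred_sub_mem_Ioo hs hc
    rw [← sub_eq_zero, bellman_pathValue_sub hp hs hc]
    simp only [hc, ne_eq, not_false_eq_true, forall_const, show r 0 ≠ 0 ∨ r 1 ≠ 0 by omega]
    refine ⟨fun h => by_contra fun ht => ?_, fun h => by simp [h]⟩
    have := mul_lt_max_zero_two_mul hd₀ hd₂ (sub_ne_zero.2 ht)
    linarith

lemma pathValue_le_bellman {r : Fin 3 → ℕ} {p : Fin 3 → ℝ} (hp : Digraph'.IsMove r p) :
    pathValue r ≤ P3.bellman pathValue r p := by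
  by_cases hdeg : r 2 = 0 ∨ r 0 + r 1 = 0
  · exact (bellman_pathValue_of_degenerate hp hdeg).ge
  · obtain ⟨hc, hs⟩ : r 2 ≠ 0 ∧ r 0 + r 1 ≠ 0 := not_or.1 hdeg
    obtain ⟨hd₀, hd₂⟩ := coinValue_pred_sub_mem_Ioo hs hc
    linarith [bellman_pathValue_sub hp hs hc, mul_le_max_zero_two_mul (t := p 2 - 1 / 2) hd₀.le hd₂.le]

lemma exists_isMove_bellman_pathValue_eq {r : Fin 3 → ℕ} (hr : r ≠ 0) :
    ∃ p, Digraph'.IsMove r p ∧ P3.bellman pathValue r p = pathValue r := by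
  by_cases h : r 2 ≠ 0 ∧ (r 0 ≠ 0 ∨ r 1 ≠ 0)
  · obtain ⟨h2, j, hj, hj2⟩ : r 2 ≠ 0 ∧ ∃ j : Fin 3, r j ≠ 0 ∧ j ≠ 2 := by
      refine ⟨h.1, ?_⟩
      rcases h.2 with h0 | h1
      exacts [⟨0, h0, by decide⟩, ⟨1, h1, by decide⟩]
    have hp := Digraph'.convex_isMove r (Digraph'.isMove_single hj) (Digraph'.isMove_single h2)
      (by norm_num : (0 : ℝ) ≤ 1 / 2) (by norm_num : (0 : ℝ) ≤ 1 / 2) (by norm_num)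
    refine ⟨_, hp, (bellman_pathValue_eq_iff hp).2 fun _ _ => ?_⟩
    simp [hj2.symm]
  · obtain ⟨u, hu⟩ : ∃ u, r u ≠ 0 := Function.ne_iff.1 hr
    have hp := Digraph'.isMove_single hu
    exact ⟨_, hp, (bellman_pathValue_eq_iff hp).2 fun h2 h01 => absurd ⟨h2, h01⟩ h⟩

lemma P3_value : P3.value = pathValue :=
  P3.value_eq_of_isLeast pathValue_zero fun _ hr =>
    ⟨exists_isMove_bellman_pathValue_eq hr,
      Set.forall_mem_image.2 fun _ hp => pathValue_le_bellman hp⟩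

theorem path3_optimal_iff (R : ReiStrategy P3) :
    P3.IsOptimal R ↔
      ∀ r : Fin 3 → ℕ, r 2 ≠ 0 → (r 0 ≠ 0 ∨ r 1 ≠ 0) → R.play r 2 = 1 / 2 := by
  rw [P3.isOptimal_iff, P3_value]
  refine ⟨fun h r h2 => ?_, fun h r hr => ?_⟩
  · have hr : r ≠ 0 := fun h0 => h2 (by simp [h0])
    exact (bellman_pathValue_eq_iff (Digraph'.isMove_play R hr)).1 (h r hr) h2
  · exact (bellman_pathValue_eq_iff (Digraph'.isMove_play R hr)).2 (h r)
end
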